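/- arXiv:2307.02022 — 2 statements merged into one kernel-verified Lean document; each statement's English description precedes it below -/
import Mathlib

section
/- Let v_1, …, v_n enumerate the vertices of a finite simple graph G, let f : 2^V → ℝ be a normalized submodular function, let S ⊆ V, and let w : V → ℝ_{≥0} satisfy w_j = 0 for v_j ∉ S and w_i = ν_f(S, v_i) − Σ_{v_j ∈ B_i ∩ S} w_j for every v_i ∈ S. Let S′ ⊆ S be a set such that for every v_{i′} ∈ S \ S′ there exists v_i ∈ S′ with i > i′ and v_{i′} ∈ N(v_i) (this is the property of the set produced by the second phase, which pops S in reverse insertion order and keeps each vertex not conflicting with vertices already kept). Then f(S′) ≥ Σ_{i=1}^n w_i. -/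
/-!
Order `S'` increasingly. Submodularity makes incremental values shrink as the preceding set
grows, so `∑_{i ∈ S'} ν_f(S, vᵢ) ≤ ∑_{i ∈ S'} ν_f(S', vᵢ) = f(S')` by telescoping. On the other
hand, by the defining equation of `w`, `∑_{i ∈ S'} ν_f(S, vᵢ) = ∑_{i ∈ S'} (wᵢ + w(Bᵢ ∩ S))`, and
the sets `Bᵢ ∩ S` with `i ∈ S'` cover `S \ S'`; as `w ≥ 0` vanishes off `S`, this sum is at least
`∑ᵢ wᵢ`.
-/

open Finset

/-- A set of vertices is independent if no two of its vertices are adjacent. -/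
def IsIndep {n : ℕ} (G : SimpleGraph (Fin n)) (S : Finset (Fin n)) : Prop :=
  ∀ u ∈ S, ∀ v ∈ S, ¬ G.Adj u v

/-- `A_i`: the neighbors of `v_i` that come after `v_i` in the ordering. -/
def laterNbrs {n : ℕ} (G : SimpleGraph (Fin n)) [DecidableRel G.Adj] (i : Fin n) :
    Finset (Fin n) :=
  Finset.univ.filter (fun j => G.Adj i j ∧ i < j)

/-- `B_i`: the neighbors of `v_i` that come before `v_i` in the ordering. -/
def earlierNbrs {n : ℕ} (G : SimpleGraph (Fin n)) [DecidableRel G.Adj] (i : Fin n) :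
    Finset (Fin n) :=
  Finset.univ.filter (fun j => G.Adj i j ∧ j < i)

/-- The enumeration of `Fin n` (in its natural order) is an inductively `k`-independent
ordering of `G`. -/
def InductivelyKIndep {n : ℕ} (G : SimpleGraph (Fin n)) [DecidableRel G.Adj] (k : ℕ) : Prop :=
  ∀ i : Fin n, ∀ S ⊆ laterNbrs G i, IsIndep G S → S.card ≤ k

/-- A set function is submodular. -/
def Submodular {V : Type*} [DecidableEq V] (f : Finset V → ℝ) : Prop :=
  ∀ A B : Finset V, f (A ∪ B) + f (A ∩ B) ≤ f A + f B

/-- The incremental value `ν_f(S, e) = f(S' ∪ {e}) - f(S')` where `S' = {s ∈ S : s < e}`. -/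
def incv {V : Type*} [LinearOrder V] (f : Finset V → ℝ) (S : Finset V) (e : V) : ℝ :=
  f (insert e (S.filter (fun s => s < e))) - f (S.filter (fun s => s < e))

theorem sum_biUnion_le_sum_sum {ι α M : Type*} [DecidableEq α] [AddCommMonoid M] [PartialOrder M]
    [IsOrderedAddMonoid M] {w : α → M} (hw : ∀ a, 0 ≤ w a) (s : Finset ι) (t : ι → Finset α) :
    ∑ a ∈ s.biUnion t, w a ≤ ∑ i ∈ s, ∑ a ∈ t i, w a := by
  rw [← sup_eq_biUnion]
  refine apply_sup_le_sum (f := fun u => ∑ a ∈ u, w a) sum_empty (fun {u v} => ?_) s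
  rw [sup_eq_union, ← sum_union_inter]
  exact le_add_of_nonneg_right (sum_nonneg fun a _ => hw a)

section Incremental

variable {V : Type*} [LinearOrder V] {f : Finset V → ℝ}

theorem Submodular.insert_sub_le_insert_sub (hf : Submodular f) {A B : Finset V} (hAB : A ⊆ B)
    {e : V} (he : e ∉ B) : f (insert e B) - f B ≤ f (insert e A) - f A := by
  have h := hf (insert e A) B
  rw [insert_union, union_eq_right.2 hAB, insert_inter_of_notMem he, inter_eq_left.2 hAB] at h
  linarith

theorem Submodular.incv_anti (hf : Submodular f) {S T : Finset V} (hTS : T ⊆ S) (i : V) :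
    incv f S i ≤ incv f T i :=
  hf.insert_sub_le_insert_sub (filter_subset_filter _ hTS) (by simp)

theorem sum_incv_self (hf0 : f ∅ = 0) (T : Finset V) : ∑ i ∈ T, incv f T i = f T := by
  induction T using Finset.induction_on_max with
  | empty => simp [hf0]
  | insert a s hlt ih =>
    have ha : a ∉ s := fun ha => lt_irrefl a (hlt a ha)
    have hlast : incv f (insert a s) a = f (insert a s) - f s := by
      rw [incv, filter_insert, if_neg (lt_irrefl a), filter_true_of_mem hlt]
    have hprefix : ∀ i ∈ s, incv f (insert a s) i = incv f s i := fun i hi => by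
      rw [incv, incv, filter_insert, if_neg (hlt i hi).not_gt]
    rw [sum_insert ha, sum_congr rfl hprefix, ih, hlast, sub_add_cancel]

theorem Submodular.sum_incv_le (hf : Submodular f) (hf0 : f ∅ = 0) {S T : Finset V}
    (hTS : T ⊆ S) : ∑ i ∈ T, incv f S i ≤ f T :=
  (sum_le_sum fun i _ => hf.incv_anti hTS i).trans_eq (sum_incv_self hf0 T)

end Incremental

/-- Lower bound on the output of the second phase (`lower-bound-pd`): if the weights satisfy
`wᵢ = ν_f(S, vᵢ) − ∑_{vⱼ ∈ Bᵢ ∩ S} wⱼ` on `S` and vanish off `S`, and every vertex of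
`S \ S'` has a later neighbor in `S'`, then `f(S') ≥ ∑ᵢ wᵢ`. -/
theorem primal_dual_lower_bound {n : ℕ}
    (G : SimpleGraph (Fin n)) [DecidableRel G.Adj]
    (f : Finset (Fin n) → ℝ) (hsub : Submodular f) (hnorm : f ∅ = 0)
    (S : Finset (Fin n)) (w : Fin n → ℝ)
    (hw0 : ∀ j, 0 ≤ w j) (hwS : ∀ j ∉ S, w j = 0)
    (hwdef : ∀ i ∈ S, w i = incv f S i - ∑ j ∈ earlierNbrs G i ∩ S, w j)
    (S' : Finset (Fin n)) (hS'sub : S' ⊆ S)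
    (hpop : ∀ i' ∈ S \ S', ∃ i ∈ S', i' < i ∧ G.Adj i i') :
    ∑ i, w i ≤ f S' := by
  have hcover : S \ S' ⊆ S'.biUnion fun i => earlierNbrs G i ∩ S := fun i' hi' => by
    obtain ⟨i, hi, hlt, hadj⟩ := hpop i' hi'
    exact mem_biUnion.2 ⟨i, hi, by simp [earlierNbrs, hadj, hlt, (mem_sdiff.1 hi').1]⟩
  calc ∑ i, w i = ∑ i ∈ S', w i + ∑ i ∈ S \ S', w i := by
        rw [add_comm, sum_sdiff hS'sub, sum_subset (subset_univ S) fun j _ hj => hwS j hj]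
    _ ≤ ∑ i ∈ S', w i + ∑ i ∈ S', ∑ j ∈ earlierNbrs G i ∩ S, w j := by
        grw [sum_le_sum_of_subset_of_nonneg hcover fun j _ _ => hw0 j, sum_biUnion_le_sum_sum hw0]
    _ = ∑ i ∈ S', incv f S i := by
        rw [← sum_add_distrib]
        exact sum_congr rfl fun i hi => by rw [hwdef i (hS'sub hi)]; ring
    _ ≤ f S' := hsub.sum_incv_le hnorm hS'sub
end

section
/- Let v_1, …, v_n be an inductively k-independent ordering of a finite simple graph G with k ≥ 1 and let w : V → ℝ_{≥0} be vertex weights. Suppose y : V → ℝ_{≥0} satisfies y_i + Σ_{v_j ∈ B_i} y_j ≥ w_i for every index i, with equality for every v_i ∈ S where S = {v_i : y_i > 0}, and let S′ ⊆ S be an independent set such that every v_{i′} ∈ S \ S′ has a neighbor v_i ∈ S′ with i > i′. Then every independent set T of G satisfies Σ_{v_i ∈ T} w_i ≤ k · Σ_{v_i ∈ S′} w_i; that is, the primal-dual algorithm's output S′ is a 1/k-approximation for maximum weight independent set. -/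
/-! Weak duality with multiplicities. Summing the dual constraints `y_i + ∑_{j ∈ B_i} y_j ≥ w_i`
over an independent set `T` counts each `y_j` at most `k` times: once for `j ∈ T` itself, or else
once per vertex of the independent set `T ∩ A_j`. Hence `w(T) ≤ k ∑ y`. Summing the tight
constraints over `S'` instead counts every `y_j` with `j ∈ S` at least once, since either
`j ∈ S'` or `j ∈ B_i` for some `i ∈ S'`; and `y_j = 0` off `S`. Hence `∑ y ≤ w(S')`. -/

open Finset

lemma IsIndep.mono {n : ℕ} {G : SimpleGraph (Fin n)} {T U : Finset (Fin n)} (hT : IsIndep G T)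
    (hUT : U ⊆ T) : IsIndep G U :=
  fun u hu v hv => hT u (hUT hu) v (hUT hv)

section

variable {n : ℕ} (G : SimpleGraph (Fin n)) [DecidableRel G.Adj]

lemma mem_earlierNbrs {i j : Fin n} : j ∈ earlierNbrs G i ↔ G.Adj i j ∧ j < i := by
  simp [earlierNbrs]

lemma mem_laterNbrs {i j : Fin n} : j ∈ laterNbrs G i ↔ G.Adj i j ∧ i < j := by
  simp [laterNbrs]

/-- The number of dual constraints indexed by `U` in which the variable `y_j` occurs. -/
def dualMultiplicity (U : Finset (Fin n)) (j : Fin n) : ℕ :=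
  #{i ∈ U | j ∈ insert i (earlierNbrs G i)}

lemma sum_dual_constraint_eq (U : Finset (Fin n)) (y : Fin n → ℝ) :
    ∑ i ∈ U, (y i + ∑ j ∈ earlierNbrs G i, y j) = ∑ j, (dualMultiplicity G U j : ℝ) * y j := by
  have h_insert : ∀ i, y i + ∑ j ∈ earlierNbrs G i, y j = ∑ j ∈ insert i (earlierNbrs G i), y j :=
    fun i => (sum_insert (by simp [mem_earlierNbrs])).symm
  simp only [h_insert, dualMultiplicity, ← nsmul_eq_mul, ← sum_const]
  exact sum_comm' (by simp)

variable {G}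

lemma dualMultiplicity_le_of_isIndep {k : ℕ} (hk : 1 ≤ k) (hG : InductivelyKIndep G k)
    {T : Finset (Fin n)} (hT : IsIndep G T) (j : Fin n) : dualMultiplicity G T j ≤ k := by
  by_cases hjT : j ∈ T
  · have h_single : {i ∈ T | j ∈ insert i (earlierNbrs G i)} = {j} := by
      ext i
      simp only [mem_filter, mem_insert, mem_earlierNbrs, mem_singleton]
      constructor
      · rintro ⟨hiT, rfl | ⟨hij, -⟩⟩
        · rfl
        · exact absurd hij (hT i hiT j hjT)
      · rintro rfl
        exact ⟨hjT, Or.inl rfl⟩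
    rw [dualMultiplicity, h_single, card_singleton]
    exact hk
  · have h_later : {i ∈ T | j ∈ insert i (earlierNbrs G i)} ⊆ laterNbrs G j := by
      intro i hi
      simp only [mem_filter, mem_insert, mem_earlierNbrs] at hi
      obtain ⟨hiT, rfl | ⟨hij, hji⟩⟩ := hi
      · exact absurd hiT hjT
      · exact (mem_laterNbrs G).2 ⟨hij.symm, hji⟩
    exact hG j _ h_later (hT.mono (filter_subset _ _))

lemma one_le_dualMultiplicity {S S' : Finset (Fin n)}
    (hpop : ∀ i' ∈ S \ S', ∃ i ∈ S', i' < i ∧ G.Adj i i') {j : Fin n} (hj : j ∈ S) :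
    1 ≤ dualMultiplicity G S' j := by
  refine one_le_card.2 ?_
  by_cases hjS' : j ∈ S'
  · exact ⟨j, mem_filter.2 ⟨hjS', mem_insert_self _ _⟩⟩
  · obtain ⟨i, hiS', hji, hij⟩ := hpop j (mem_sdiff.2 ⟨hj, hjS'⟩)
    exact ⟨i, mem_filter.2 ⟨hiS', mem_insert_of_mem ((mem_earlierNbrs G).2 ⟨hij, hji⟩)⟩⟩

end

theorem primal_dual_mwis_approximation_general {n k : ℕ} (hk : 1 ≤ k)
    (G : SimpleGraph (Fin n)) [DecidableRel G.Adj]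
    (hG : InductivelyKIndep G k)
    (w y : Fin n → ℝ) (hy : ∀ i, 0 ≤ y i)
    (hfeas : ∀ i : Fin n, w i ≤ y i + ∑ j ∈ earlierNbrs G i, y j)
    (S : Finset (Fin n)) (hSdef : ∀ i : Fin n, i ∈ S ↔ 0 < y i)
    (htight : ∀ i ∈ S, y i + ∑ j ∈ earlierNbrs G i, y j = w i)
    (S' : Finset (Fin n)) (hS'sub : S' ⊆ S)
    (hpop : ∀ i' ∈ S \ S', ∃ i ∈ S', i' < i ∧ G.Adj i i')
    (T : Finset (Fin n)) (hT : IsIndep G T) :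
    ∑ i ∈ T, w i ≤ k * ∑ i ∈ S', w i := by
  have hT_le : ∀ j, (dualMultiplicity G T j : ℝ) * y j ≤ k * y j := fun j =>
    mul_le_mul_of_nonneg_right (mod_cast dualMultiplicity_le_of_isIndep hk hG hT j) (hy j)
  have hS'_ge : ∀ j, y j ≤ dualMultiplicity G S' j * y j := by
    intro j
    rcases (hy j).eq_or_lt with hj | hj
    · simp [← hj]
    · exact le_mul_of_one_le_left (hy j) (mod_cast one_le_dualMultiplicity hpop ((hSdef j).2 hj))
  calc ∑ i ∈ T, w i ≤ ∑ i ∈ T, (y i + ∑ j ∈ earlierNbrs G i, y j) := sum_le_sum fun i _ => hfeas i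
    _ = ∑ j, (dualMultiplicity G T j : ℝ) * y j := sum_dual_constraint_eq G T y
    _ ≤ k * ∑ j, y j := by rw [mul_sum]; exact sum_le_sum fun j _ => hT_le j
    _ ≤ k * ∑ j, (dualMultiplicity G S' j : ℝ) * y j := by gcongr with j; exact hS'_ge j
    _ = k * ∑ i ∈ S', w i := by
      rw [← sum_dual_constraint_eq, sum_congr rfl fun i hi => htight i (hS'sub hi)]

/-- The two-phase primal-dual algorithm for MWIS in inductively `k`-independent graphs is a
`1/k`-approximation: under the invariants maintained by the algorithm, every independent set
`T` satisfies `∑_{vᵢ ∈ T} wᵢ ≤ k ∑_{vᵢ ∈ S'} wᵢ`. -/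
theorem primal_dual_mwis_approximation {n k : ℕ} (hk : 1 ≤ k)
    (G : SimpleGraph (Fin n)) [DecidableRel G.Adj]
    (hG : InductivelyKIndep G k)
    (w y : Fin n → ℝ) (hw : ∀ i, 0 ≤ w i) (hy : ∀ i, 0 ≤ y i)
    (hfeas : ∀ i : Fin n, w i ≤ y i + ∑ j ∈ earlierNbrs G i, y j)
    (S : Finset (Fin n)) (hSdef : ∀ i : Fin n, i ∈ S ↔ 0 < y i)
    (htight : ∀ i ∈ S, y i + ∑ j ∈ earlierNbrs G i, y j = w i)
    (S' : Finset (Fin n)) (hS'sub : S' ⊆ S) (hS'ind : IsIndep G S')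
    (hpop : ∀ i' ∈ S \ S', ∃ i ∈ S', i' < i ∧ G.Adj i i')
    (T : Finset (Fin n)) (hT : IsIndep G T) :
    ∑ i ∈ T, w i ≤ k * ∑ i ∈ S', w i :=
  primal_dual_mwis_approximation_general hk G hG w y hy hfeas S hSdef htight S' hS'sub hpop T hT
end
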